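/- arXiv:1610.05495 — 4 statements merged into one kernel-verified Lean document; each statement's English description precedes it below -/
import Mathlib

section
/- For every integer n ≥ 3 and x ∈ (0, π), the sum φ_n(x) = 2·∑_{j=1}^{n-1} sin(jx) + sin(nx) is nonnegative; moreover for n = 1 and n = 2, φ_n(x) > 0. -/
/-! Multiplying by `sin (x / 2)` telescopes the sum: by the sum-to-product formulas,
`sin (x / 2) * φₙ(x) = cos (x / 2) * (1 - cos (n x))`. On `(0, π)` both half-angle factors are
positive, so `φₙ(x) ≥ 0`, with equality exactly when `cos (n x) = 1`; for `n ≤ 2` we have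
`0 < n x < 2π`, which rules this out. -/

open Real Finset

noncomputable def phi (n : ℕ) (x : ℝ) : ℝ :=
  2 * ∑ j ∈ Finset.Icc 1 (n - 1), Real.sin (j * x) + Real.sin (n * x)

lemma phi_succ (n : ℕ) (x : ℝ) :
    phi (n + 1) x = phi n x + sin (n * x) + sin ((n + 1) * x) := by
  rcases n with _ | m
  · simp [phi]
  · simp only [phi, Nat.add_sub_cancel, sum_Icc_succ_top (Nat.le_add_left 1 m)]
    push_cast
    ring

lemma sin_half_mul_sin_add_sin (x y : ℝ) :
    sin (x / 2) * (sin y + sin (y + x)) = cos (x / 2) * (cos y - cos (y + x)) := by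
  rw [sin_add_sin, cos_sub_cos, show (y - (y + x)) / 2 = -(x / 2) by ring, sin_neg, cos_neg]
  ring

lemma sin_half_mul_phi (n : ℕ) (x : ℝ) :
    sin (x / 2) * phi n x = cos (x / 2) * (1 - cos (n * x)) := by
  induction n with
  | zero => simp [phi]
  | succ n ih =>
    have hstep := sin_half_mul_sin_add_sin x (n * x)
    rw [← add_one_mul] at hstep
    rw [phi_succ, Nat.cast_succ]
    linear_combination ih + hstep

lemma sin_half_pos {x : ℝ} (hx : x ∈ Set.Ioo 0 π) : 0 < sin (x / 2) :=
  sin_pos_of_pos_of_lt_pi (by linarith [hx.1]) (by linarith [hx.2, pi_pos])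

lemma phi_eq_of_mem_Ioo {x : ℝ} (hx : x ∈ Set.Ioo 0 π) (n : ℕ) :
    phi n x = cos (x / 2) / sin (x / 2) * (1 - cos (n * x)) := by
  rw [div_mul_eq_mul_div, eq_div_iff (sin_half_pos hx).ne']
  linear_combination sin_half_mul_phi n x

lemma cos_half_div_sin_half_pos {x : ℝ} (hx : x ∈ Set.Ioo 0 π) :
    0 < cos (x / 2) / sin (x / 2) :=
  div_pos (cos_pos_of_mem_Ioo ⟨by linarith [hx.1, pi_pos], by linarith [hx.2]⟩) (sin_half_pos hx)

lemma phi_nonneg {x : ℝ} (hx : x ∈ Set.Ioo 0 π) (n : ℕ) : 0 ≤ phi n x := by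
  rw [phi_eq_of_mem_Ioo hx]
  exact mul_nonneg (cos_half_div_sin_half_pos hx).le (sub_nonneg.2 (cos_le_one _))

lemma phi_pos {x : ℝ} (hx : x ∈ Set.Ioo 0 π) {n : ℕ} (hn : 0 < n) (hnx : n * x < 2 * π) :
    0 < phi n x := by
  have hnx_pos : 0 < n * x := mul_pos (Nat.cast_pos.2 hn) hx.1
  have hcos : cos (n * x) ≠ 1 := fun h =>
    hnx_pos.ne' ((cos_eq_one_iff_of_lt_of_lt (by linarith [pi_pos]) hnx).1 h)
  rw [phi_eq_of_mem_Ioo hx]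
  exact mul_pos (cos_half_div_sin_half_pos hx) (sub_pos.2 (lt_of_le_of_ne (cos_le_one _) hcos))

theorem stmt_1 :
    (∀ n : ℕ, 3 ≤ n → ∀ x ∈ Set.Ioo 0 Real.pi, 0 ≤ phi n x) ∧
    (∀ n : ℕ, n = 1 ∨ n = 2 → ∀ x ∈ Set.Ioo 0 Real.pi, 0 < phi n x) := by
  refine ⟨fun n _ x hx => phi_nonneg hx n, ?_⟩
  rintro n hn x hx
  have hn_le : (n : ℝ) ≤ 2 := by rcases hn with rfl | rfl <;> norm_num
  refine phi_pos hx (by omega) ?_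
  nlinarith [hx.1, hx.2]
end

section
/- If real numbers c_1, ..., c_n satisfy γ_{k,n} = c_k + 2·∑_{j=1}^{n-k} (−1)^j c_{j+k} ≥ 0 for all k = 1, ..., n, then ∑_{j=1}^n c_j sin(jx) ≥ 0 for all x ∈ (0, π). -/
open Real Finset

private def gam (n : ℕ) (c : ℕ → ℝ) (k : ℕ) : ℝ :=
  c k + 2 * ∑ j ∈ Finset.Icc 1 (n - k), (-1 : ℝ) ^ j * c (j + k)

private lemma gam_rec (n : ℕ) (c : ℕ → ℝ) (k : ℕ) (hk : k < n) :
    gam n c k = c k - c (k + 1) - gam n c (k + 1) := by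
  unfold gam
  obtain ⟨m, hm⟩ : ∃ m, n - k = m + 1 := ⟨n - k - 1, by omega⟩
  have hm2 : n - (k + 1) = m := by omega
  rw [hm, hm2, ← Finset.Ico_add_one_right_eq_Icc, ← Finset.Ico_add_one_right_eq_Icc,
    Finset.sum_Ico_eq_sum_range, Finset.sum_Ico_eq_sum_range]
  simp only [show m + 1 + 1 - 1 = m + 1 from rfl, show m + 1 - 1 = m from rfl]
  rw [Finset.sum_range_succ']
  have hcongr : ∀ i ∈ Finset.range m,
      ((-1 : ℝ)) ^ (1 + (i + 1)) * c (1 + (i + 1) + k)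
        = -(((-1 : ℝ)) ^ (1 + i) * c (1 + i + (k + 1))) := by
    intro i _
    rw [show 1 + (i + 1) + k = 1 + i + (k + 1) by omega, show 1 + (i + 1) = (1 + i) + 1 by omega,
      pow_succ]
    ring
  rw [Finset.sum_congr rfl hcongr, Finset.sum_neg_distrib, Nat.add_comm 1 k]
  ring

private lemma c_eq (n : ℕ) (c : ℕ → ℝ) :
    ∀ d k, 1 ≤ k → k ≤ n → n - k = d →
      c k = gam n c k + 2 * ∑ m ∈ Finset.Icc (k + 1) n, gam n c m := by
  intro d
  induction d with
  | zero =>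
    intro k h1 h2 h3
    have hkn : k = n := by omega
    subst hkn
    rw [Finset.Icc_eq_empty (by omega)]
    simp [gam]
  | succ d ih =>
    intro k h1 h2 h3
    have hk : k < n := by omega
    have h4 := gam_rec n c k hk
    have h5 := ih (k + 1) (by omega) (by omega) (by omega)
    have hins : Finset.Icc (k + 1) n = insert (k + 1) (Finset.Icc (k + 2) n) := by
      ext a; simp only [Finset.mem_Icc, Finset.mem_insert]; omega
    rw [hins, Finset.sum_insert (by simp only [Finset.mem_Icc]; omega)]
    linarith

private lemma sin_sum_identity (x : ℝ) (m : ℕ) :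
    Real.sin (x / 2) * (Real.sin (m * x) + 2 * ∑ k ∈ Finset.Ico 1 m, Real.sin (k * x))
      = 2 * Real.cos (x / 2) * Real.sin (m * x / 2) ^ 2 := by
  induction m with
  | zero => simp
  | succ m ih =>
    rcases Nat.eq_zero_or_pos m with hm0 | hm1
    · subst hm0
      have hsx : Real.sin x = 2 * Real.sin (x / 2) * Real.cos (x / 2) := by
        have h := Real.sin_two_mul (x / 2)
        rw [show 2 * (x / 2) = x by ring] at h
        linarith
      norm_num
      rw [hsx]; ring
    rw [Finset.sum_Ico_succ_top hm1]
    push_cast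
    set a := x / 2 with ha
    set b := (m : ℝ) * x / 2 with hb
    have e1 : (m : ℝ) * x = 2 * b := by rw [hb]; ring
    have e2 : ((m : ℝ) + 1) * x = 2 * b + 2 * a := by rw [hb, ha]; ring
    have e3 : ((m : ℝ) + 1) * x / 2 = b + a := by rw [hb, ha]; ring
    rw [e1] at ih ⊢
    rw [e3, e2]
    rw [Real.sin_two_mul] at ih
    rw [Real.sin_add (2 * b) (2 * a), Real.sin_add b a, Real.sin_two_mul,
      Real.sin_two_mul, Real.cos_two_mul, Real.cos_two_mul]
    linear_combination ih + 2 * Real.sin a ^ 2 * Real.cos a * (Real.sin_sq_add_cos_sq b)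
      - 2 * Real.cos a * Real.sin b ^ 2 * (Real.sin_sq_add_cos_sq a)

private lemma T_nonneg (x : ℝ) (hx : x ∈ Set.Ioo 0 Real.pi) (m : ℕ) :
    0 ≤ Real.sin (m * x) + 2 * ∑ k ∈ Finset.Ico 1 m, Real.sin (k * x) := by
  obtain ⟨hx0, hxpi⟩ := hx
  have hs : 0 < Real.sin (x / 2) :=
    Real.sin_pos_of_pos_of_lt_pi (by linarith) (by linarith [Real.pi_pos])
  have hc : 0 ≤ Real.cos (x / 2) :=
    Real.cos_nonneg_of_mem_Icc ⟨by linarith [Real.pi_pos], by linarith⟩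
  have hid := sin_sum_identity x m
  nlinarith [sq_nonneg (Real.sin (m * x / 2)), mul_nonneg hc (sq_nonneg (Real.sin (m * x / 2)))]

theorem stmt_3 (n : ℕ) (c : ℕ → ℝ)
    (hγ : ∀ k ∈ Finset.Icc 1 n,
      0 ≤ c k + 2 * ∑ j ∈ Finset.Icc 1 (n - k), (-1 : ℝ) ^ j * c (j + k)) :
    ∀ x ∈ Set.Ioo 0 Real.pi, 0 ≤ ∑ j ∈ Finset.Icc 1 n, c j * Real.sin (j * x) := by
  intro x hx
  have hγ' : ∀ k ∈ Finset.Icc 1 n, 0 ≤ gam n c k := by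
    intro k hk; exact hγ k hk
  have key : ∑ j ∈ Finset.Icc 1 n, c j * Real.sin (j * x)
      = ∑ m ∈ Finset.Icc 1 n, gam n c m *
          (Real.sin (m * x) + 2 * ∑ k ∈ Finset.Ico 1 m, Real.sin (k * x)) := by
    have step1 : ∑ j ∈ Finset.Icc 1 n, c j * Real.sin (j * x)
        = ∑ j ∈ Finset.Icc 1 n,
            (gam n c j * Real.sin (j * x)
              + 2 * ∑ m ∈ Finset.Icc (j + 1) n, gam n c m * Real.sin (j * x)) := by
      refine Finset.sum_congr rfl fun j hj => ?_
      simp only [Finset.mem_Icc] at hj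
      rw [c_eq n c (n - j) j hj.1 hj.2 rfl, add_mul, mul_assoc, Finset.sum_mul]
    rw [step1, Finset.sum_add_distrib, ← Finset.mul_sum]
    have hIcc : ∀ a : ℕ, Finset.Icc a n = Finset.Ico a (n + 1) := by
      intro a; rw [Finset.Ico_add_one_right_eq_Icc]
    rw [hIcc 1]
    conv_lhs => rw [show (∑ j ∈ Finset.Ico 1 (n + 1),
        ∑ m ∈ Finset.Icc (j + 1) n, gam n c m * Real.sin (j * x))
      = ∑ j ∈ Finset.Ico 1 (n + 1),
        ∑ m ∈ Finset.Ico (j + 1) (n + 1), gam n c m * Real.sin (j * x) from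
      Finset.sum_congr rfl fun j _ => by rw [hIcc (j + 1)]]
    rw [Finset.sum_Ico_Ico_comm' 1 (n + 1) (fun i j => gam n c j * Real.sin (i * x))]
    rw [Finset.mul_sum, ← Finset.sum_add_distrib]
    refine Finset.sum_congr rfl fun m _ => ?_
    rw [← Finset.mul_sum]
    ring
  rw [key]
  refine Finset.sum_nonneg fun m hm => mul_nonneg (hγ' m hm) (T_nonneg x hx m)
end

section
/- Let n ≥ 3 and let a_1, ..., a_n be real numbers with 2a_k ≤ a_{k−1} + a_{k+1} for k = 2, ..., n−1, and 0 ≤ 2a_n ≤ a_{n−1}. Then for all x ∈ (0, π), ∑_{j=1}^n a_j sin(jx) − ∑_{j=1}^{n−2} a_{j+2} sin(jx) ≥ 0. -/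
/-!
Since `2 sin x cos (k x) = sin ((k + 1) x) - sin ((k - 1) x)`, the difference of the two sine sums
telescopes to `sin x * (a₁ + 2 ∑_{k=1}^{n-1} a_{k+1} cos (k x))`. Multiplying this cosine
polynomial by `sin² (x / 2)` and summing by parts twice (Fejér's argument) writes it as a
combination of the squares `sin² ((k + 1) x / 2)` whose coefficients are the second differences
of `a` together with `a_{n-1} - 2 a_n` and `a_n`, all nonnegative by hypothesis.
-/

open Real Finset

noncomputable def cosineSum (c : ℕ → ℝ) (m : ℕ) (x : ℝ) : ℝ :=
  c 0 + 2 * ∑ k ∈ Icc 1 m, c k * cos (k * x)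

lemma cosineSum_succ (c : ℕ → ℝ) (m : ℕ) (x : ℝ) :
    cosineSum c (m + 1) x = cosineSum c m x + 2 * c (m + 1) * cos ((m + 1 : ℕ) * x) := by
  rw [cosineSum, cosineSum, sum_Icc_succ_top (by omega)]
  ring

lemma sin_sub_sq_add_sin_add_sq_sub_two_mul_sin_sq (A s : ℝ) :
    sin (A - s) ^ 2 + sin (A + s) ^ 2 - 2 * sin A ^ 2 = 2 * cos (2 * A) * sin s ^ 2 := by
  rw [sin_add, sin_sub, cos_two_mul]
  nlinarith [sin_sq_add_cos_sq A, sin_sq_add_cos_sq s]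

lemma sin_sq_mul_cosineSum (c : ℕ → ℝ) (y : ℝ) (m : ℕ) :
    sin y ^ 2 * cosineSum c (m + 1) (2 * y)
      = ∑ k ∈ range m, (c k - 2 * c (k + 1) + c (k + 2)) * sin ((k + 1) * y) ^ 2
        + (c m - 2 * c (m + 1)) * sin ((m + 1) * y) ^ 2
        + c (m + 1) * sin ((m + 2) * y) ^ 2 := by
  induction m with
  | zero =>
    simp only [zero_add, cosineSum, Icc_self, sum_singleton, range_zero, sum_empty,
      Nat.cast_zero, Nat.cast_one, one_mul, sin_two_mul, cos_two_mul]
    ring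
  | succ m ih =>
    have key := sin_sub_sq_add_sin_add_sq_sub_two_mul_sin_sq ((m + 2) * y) y
    rw [show (m + 2) * y - y = (m + 1) * y by ring, show (m + 2) * y + y = (m + 3) * y by ring,
      show 2 * ((m + 2) * y) = (m + 2) * (2 * y) by ring] at key
    rw [cosineSum_succ, sum_range_succ]
    push_cast
    rw [show (m : ℝ) + 1 + 1 = m + 2 by ring, show (m : ℝ) + 1 + 2 = m + 3 by ring]
    linear_combination ih - c (m + 2) * key

lemma cosineSum_nonneg_of_convex {c : ℕ → ℝ} {m : ℕ}
    (hconv : ∀ k < m, 2 * c (k + 1) ≤ c k + c (k + 2))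
    (htop : 2 * c (m + 1) ≤ c m) (hlast : 0 ≤ c (m + 1)) {x : ℝ} (hx : sin (x / 2) ≠ 0) :
    0 ≤ cosineSum c (m + 1) x := by
  have hprod : 0 ≤ sin (x / 2) ^ 2 * cosineSum c (m + 1) x := by
    have hid := sin_sq_mul_cosineSum c (x / 2) m
    rw [show 2 * (x / 2) = x by ring] at hid
    rw [hid]
    refine add_nonneg (add_nonneg (sum_nonneg fun k hk => ?_) ?_) ?_
    · have := hconv k (mem_range.mp hk)
      exact mul_nonneg (by linarith) (sq_nonneg _)
    · exact mul_nonneg (by linarith) (sq_nonneg _)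
    · exact mul_nonneg hlast (sq_nonneg _)
  exact nonneg_of_mul_nonneg_right hprod (pow_two_pos_of_ne_zero hx)

lemma sine_sum_sub_shifted_eq_sin_mul_cosineSum (a : ℕ → ℝ) (x : ℝ) (l : ℕ) :
    ∑ j ∈ Icc 1 (l + 2), a j * sin (j * x) - ∑ j ∈ Icc 1 l, a (j + 2) * sin (j * x)
      = sin x * cosineSum (fun k => a (k + 1)) (l + 1) x := by
  induction l with
  | zero =>
    rw [sum_Icc_succ_top (by norm_num)]
    simp only [zero_add, cosineSum, Icc_self, sum_singleton, Nat.cast_one, one_mul,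
      Icc_eq_empty_of_lt one_pos, sum_empty, sub_zero]
    push_cast
    rw [sin_two_mul]
    ring
  | succ l ih =>
    have key : sin ((l + 3) * x) - sin ((l + 1) * x) = 2 * sin x * cos ((l + 2) * x) := by
      rw [show ((l : ℝ) + 3) * x = (l + 2) * x + x by ring,
        show ((l : ℝ) + 1) * x = (l + 2) * x - x by ring, sin_add, sin_sub]
      ring
    rw [sum_Icc_succ_top (show 1 ≤ l + 1 + 2 by omega), sum_Icc_succ_top (show 1 ≤ l + 1 by omega),
      cosineSum_succ]
    push_cast at ih ⊢
    rw [show l + 2 + 1 = l + 3 from rfl, show l + 1 + 2 = l + 3 from rfl,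
      show l + 1 + 1 + 1 = l + 3 from rfl, show (l : ℝ) + 2 + 1 = l + 3 by ring,
      show (l : ℝ) + 1 + 1 = l + 2 by ring]
    linear_combination ih + a (l + 3) * key

theorem stmt_4 (n : ℕ) (hn : 3 ≤ n) (a : ℕ → ℝ)
    (hconv : ∀ k, 2 ≤ k → k ≤ n - 1 → 2 * a k ≤ a (k - 1) + a (k + 1))
    (h1 : 0 ≤ 2 * a n) (h2 : 2 * a n ≤ a (n - 1)) :
    ∀ x ∈ Set.Ioo 0 Real.pi,
      0 ≤ ∑ j ∈ Finset.Icc 1 n, a j * Real.sin (j * x) -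
          ∑ j ∈ Finset.Icc 1 (n - 2), a (j + 2) * Real.sin (j * x) := by
  rintro x ⟨hx0, hxpi⟩
  obtain ⟨l, rfl⟩ : ∃ l, n = l + 2 := ⟨n - 2, by omega⟩
  rw [Nat.add_sub_cancel, sine_sum_sub_shifted_eq_sin_mul_cosineSum]
  have hcos : 0 ≤ cosineSum (fun k => a (k + 1)) (l + 1) x :=
    cosineSum_nonneg_of_convex (fun k _ => by simpa using hconv (k + 2) (by omega) (by omega))
      (by simpa using h2) (by linarith)
      (sin_pos_of_pos_of_lt_pi (by linarith) (by linarith)).ne'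
  exact mul_nonneg (sin_pos_of_pos_of_lt_pi hx0 hxpi).le hcos
end

section
/- For all integers n ≥ 3, real a ≥ 1, and x ∈ (0, π), S_{n,a}(x) ≥ S_{n−2,a}(x), where S_{m,a}(x) = ∑_{j=1}^m C(m + a − j, m − j) sin(jx). -/
open Real Finset

/-- Generalized binomial coefficient `(a + k choose k) = ∏_{ν=1}^{k} (a+ν)/ν`. -/
noncomputable def gbinom (a : ℝ) (k : ℕ) : ℝ := ∏ ν ∈ Finset.Icc 1 k, (a + ν) / ν

/-- `S n a x = ∑_{j=1}^n C(n+a−j, n−j) sin(jx)`. -/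
noncomputable def S (n : ℕ) (a : ℝ) (x : ℝ) : ℝ :=
  ∑ j ∈ Finset.Icc 1 n, gbinom a (n - j) * Real.sin (j * x)

lemma gbinom_zero (a : ℝ) : gbinom a 0 = 1 := by simp [gbinom]

lemma gbinom_succ (a : ℝ) (k : ℕ) :
    gbinom a (k+1) = (a + ((k:ℝ)+1)) / ((k:ℝ)+1) * gbinom a k := by
  unfold gbinom
  rw [Finset.prod_Icc_succ_top (by omega : 1 ≤ k+1)]
  push_cast
  ring

lemma gbinom_nonneg {a : ℝ} (ha : -1 ≤ a) (k : ℕ) : 0 ≤ gbinom a k := by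
  induction k with
  | zero => simp [gbinom_zero]
  | succ k ih =>
    rw [gbinom_succ]
    have hk : (0:ℝ) ≤ (k:ℝ) := Nat.cast_nonneg k
    exact mul_nonneg (div_nonneg (by linarith) (by linarith)) ih

lemma gbinom_pred (a : ℝ) (k : ℕ) :
    gbinom (a-1) (k+1) = a / ((k:ℝ)+1) * gbinom a k := by
  induction k with
  | zero => simp [gbinom_succ, gbinom_zero]
  | succ k ih =>
    have hk : (0:ℝ) ≤ (k:ℝ) := Nat.cast_nonneg k
    have h1 : ((k:ℝ)+1) ≠ 0 := by linarith
    have h2 : ((k:ℝ)+1+1) ≠ 0 := by linarith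
    rw [gbinom_succ, ih, gbinom_succ]
    push_cast
    field_simp
    ring

lemma gbinom_rec (a : ℝ) (k : ℕ) :
    gbinom a (k+1) = gbinom a k + gbinom (a-1) (k+1) := by
  have hk : (0:ℝ) ≤ (k:ℝ) := Nat.cast_nonneg k
  have h1 : ((k:ℝ)+1) ≠ 0 := by linarith
  rw [gbinom_pred, gbinom_succ]
  field_simp
  ring

lemma gbinom_mono {a : ℝ} (ha : 0 ≤ a) (k : ℕ) : gbinom a k ≤ gbinom a (k+1) := by
  rw [gbinom_rec]
  have h := gbinom_nonneg (a := a - 1) (by linarith) (k+1)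
  linarith

/-- `sin A ^ 2 - sin B ^ 2 = sin (A+B) * sin (A-B)` -/
lemma sin_sq_sub (A B : ℝ) :
    Real.sin (A+B) * Real.sin (A-B) = Real.sin A ^ 2 - Real.sin B ^ 2 := by
  rw [Real.sin_add, Real.sin_sub]
  have h1 := Real.sin_sq_add_cos_sq A
  have h2 := Real.sin_sq_add_cos_sq B
  nlinarith [h1, h2]

lemma sin_mul_sum (t : ℝ) (m : ℕ) :
    Real.sin t * ∑ j ∈ Finset.range m, Real.sin ((2*(j:ℝ)+1)*t)
      = Real.sin ((m:ℝ)*t) ^ 2 := by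
  induction m with
  | zero => simp
  | succ m ih =>
    rw [Finset.sum_range_succ, mul_add, ih]
    have h := sin_sq_sub (((m:ℝ)+1)*t) ((m:ℝ)*t)
    have e1 : ((m:ℝ)+1)*t + (m:ℝ)*t = (2*(m:ℝ)+1)*t := by ring
    have e2 : ((m:ℝ)+1)*t - (m:ℝ)*t = t := by ring
    rw [e1, e2] at h
    push_cast
    linear_combination h

lemma abel_aux (b s : ℕ → ℝ) (hb0 : ∀ k, 0 ≤ b k) (hmono : ∀ k, b (k+1) ≤ b k)
    (hP : ∀ m, 0 ≤ ∑ j ∈ Finset.range m, s j) :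
    ∀ n, b n * (∑ j ∈ Finset.range (n+1), s j) ≤ ∑ j ∈ Finset.range (n+1), b j * s j := by
  intro n
  induction n with
  | zero => simp
  | succ n ih =>
    rw [Finset.sum_range_succ, Finset.sum_range_succ (f := fun j => b j * s j)]
    have h1 := hP (n+1)
    have h2 := hmono n
    have h3 := hb0 (n+1)
    nlinarith [ih, mul_nonneg (by linarith : (0:ℝ) ≤ b n - b (n+1)) h1]

lemma S_eq (m : ℕ) (a x : ℝ) :
    S m a x = ∑ i ∈ Finset.range m, gbinom a (m - 1 - i) * Real.sin (((1+i : ℕ):ℝ) * x) := by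
  unfold S
  rw [← Finset.Ico_add_one_right_eq_Icc, Finset.sum_Ico_eq_sum_range]
  simp only [Nat.add_sub_cancel]
  apply Finset.sum_congr rfl
  intro i _
  have h : m - (1+i) = m - 1 - i := by omega
  rw [h]

lemma step (a : ℝ) (m : ℕ) (g : ℕ → ℝ) :
    ∑ i ∈ Finset.range (m+1), (gbinom a (m - i) - gbinom (a-1) (m - i)) * g i
      = ∑ i ∈ Finset.range m, gbinom a (m - 1 - i) * g i := by
  rw [Finset.sum_range_succ]
  have hlast : (gbinom a (m - m) - gbinom (a-1) (m - m)) * g m = 0 := by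
    simp [Nat.sub_self, gbinom_zero]
  rw [hlast, add_zero]
  apply Finset.sum_congr rfl
  intro i hi
  have hi' : i < m := Finset.mem_range.mp hi
  have h : m - i = (m - 1 - i) + 1 := by omega
  rw [h, gbinom_rec]
  ring

lemma S_step (a x : ℝ) (k : ℕ) :
    S (k+1) a x = S k a x
      + ∑ i ∈ Finset.range (k+1), gbinom (a-1) (k - i) * Real.sin (((1+i : ℕ):ℝ) * x) := by
  rw [S_eq, S_eq]
  simp only [Nat.add_sub_cancel]
  rw [← step a k (fun i => Real.sin (((1+i : ℕ):ℝ) * x)), ← Finset.sum_add_distrib]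
  exact Finset.sum_congr rfl (fun i _ => by ring)

lemma trig_pair (x : ℝ) (i : ℕ) :
    Real.sin (((1+i : ℕ):ℝ) * x) + Real.sin (((i : ℕ):ℝ) * x)
      = 2 * Real.cos (x/2) * Real.sin ((2*(i:ℝ)+1) * (x/2)) := by
  have h1 := Real.sin_add ((2*(i:ℝ)+1) * (x/2)) (x/2)
  have h2 := Real.sin_sub ((2*(i:ℝ)+1) * (x/2)) (x/2)
  have e1 : (2*(i:ℝ)+1) * (x/2) + x/2 = ((1+i : ℕ):ℝ) * x := by push_cast; ring
  have e2 : (2*(i:ℝ)+1) * (x/2) - x/2 = ((i : ℕ):ℝ) * x := by ring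
  rw [e1] at h1
  rw [e2] at h2
  rw [h1, h2]
  ring

theorem stmt_5 (n : ℕ) (hn : 3 ≤ n) (a : ℝ) (ha : 1 ≤ a)
    (x : ℝ) (hx : x ∈ Set.Ioo 0 Real.pi) :
    S (n - 2) a x ≤ S n a x := by
  obtain ⟨hx0, hxpi⟩ := hx
  have hpi := Real.pi_pos
  have hsint : 0 < Real.sin (x/2) :=
    Real.sin_pos_of_pos_of_lt_pi (by linarith) (by linarith)
  have hcost : 0 < Real.cos (x/2) :=
    Real.cos_pos_of_mem_Ioo ⟨by linarith, by linarith⟩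
  obtain ⟨k, rfl⟩ : ∃ k, n = k + 2 := ⟨n - 2, by omega⟩
  simp only [Nat.add_sub_cancel]
  -- two applications of S_step
  have hA := S_step a x (k+1)
  have hB := S_step a x k
  -- rewrite the second increment shifting the index
  have hB' : ∑ i ∈ Finset.range (k+2), gbinom (a-1) (k+1 - i) * Real.sin (((i : ℕ):ℝ) * x)
      = ∑ i ∈ Finset.range (k+1), gbinom (a-1) (k - i) * Real.sin (((1+i : ℕ):ℝ) * x) := by
    rw [Finset.sum_range_succ']
    have h0 : gbinom (a-1) (k+1-0) * Real.sin (((0:ℕ):ℝ) * x) = 0 := by simp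
    rw [h0, add_zero]
    apply Finset.sum_congr rfl
    intro i _
    have h1 : k + 1 - (i+1) = k - i := by omega
    have h2 : ((i+1 : ℕ):ℝ) = ((1+i : ℕ):ℝ) := by push_cast; ring
    rw [h1, h2]
  -- combined identity
  set F : ℝ := ∑ i ∈ Finset.range (k+2), gbinom (a-1) (k+1 - i) * Real.sin ((2*(i:ℝ)+1) * (x/2))
    with hF
  have hid : S (k+2) a x = S k a x + 2 * Real.cos (x/2) * F := by
    rw [hA, hB, ← hB', hF, Finset.mul_sum]
    simp only [show k+1+1 = k+2 from rfl]
    rw [add_assoc, ← Finset.sum_add_distrib]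
    congr 1
    apply Finset.sum_congr rfl
    intro i _
    have h := trig_pair x i
    linear_combination (gbinom (a-1) (k+1-i)) * h
  -- nonnegativity of F via Abel summation
  have hF0 : 0 ≤ F := by
    have hb0 : ∀ j, (0:ℝ) ≤ gbinom (a-1) (k+1 - j) :=
      fun j => gbinom_nonneg (by linarith) _
    have hmono : ∀ j, gbinom (a-1) (k+1 - (j+1)) ≤ gbinom (a-1) (k+1 - j) := by
      intro j
      rcases le_or_gt (j+1) (k+1) with h | h
      · have he : k + 1 - j = (k + 1 - (j+1)) + 1 := by omega
        rw [he]
        exact gbinom_mono (by linarith) _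
      · have he : k + 1 - j = k + 1 - (j+1) := by omega
        rw [he]
    have hP : ∀ m, (0:ℝ) ≤ ∑ j ∈ Finset.range m, Real.sin ((2*(j:ℝ)+1) * (x/2)) := by
      intro m
      have h := sin_mul_sum (x/2) m
      nlinarith [sq_nonneg (Real.sin ((m:ℝ)*(x/2)))]
    have habel := abel_aux (fun j => gbinom (a-1) (k+1 - j))
      (fun j => Real.sin ((2*(j:ℝ)+1) * (x/2))) hb0 hmono hP (k+1)
    have hlow : 0 ≤ gbinom (a-1) (k+1 - (k+1))
        * ∑ j ∈ Finset.range (k+2), Real.sin ((2*(j:ℝ)+1) * (x/2)) :=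
      mul_nonneg (hb0 (k+1)) (hP (k+2))
    calc (0:ℝ) ≤ _ := hlow
    _ ≤ _ := habel
  nlinarith [mul_nonneg hcost.le hF0, hid]
end
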